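/- If x(t) solves ẋ = A(t)x on [t₀, ∞), where A is a continuous matrix-valued function, then for all t ≥ t₀, ‖x(t)‖ ≤ ‖x(t₀)‖ · exp(∫_{t₀}^t μ[A(s)] ds). -/

import Mathlib

/-! Along a solution, `φ t = ‖x t‖` has upper right Dini derivative at most `μ[A t] φ t`, since
`‖x (t + h)‖ ≤ ‖(I + h A t) (x t)‖ + o(h) ≤ ‖I + h A t‖ ‖x t‖ + o(h)`. Comparing `φ` with the strict
supersolutions `(φ t₀ + ε) exp (∫ μ[A] + ε (t - t₀))` of `y' = μ[A] y` and letting `ε → 0` gives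
the bound. The comparison functions are differentiable because `μ` is `1`-Lipschitz, so `μ ∘ A` is
continuous. -/

open Filter Topology Set

section LogNorm

variable {E : Type*} [NormedAddCommGroup E] [NormedSpace ℝ E]

def IsLogNorm (μ : (E →L[ℝ] E) → ℝ) : Prop :=
  ∀ M : E →L[ℝ] E,
    Tendsto (fun h : ℝ => (‖ContinuousLinearMap.id ℝ E + h • M‖ - 1) / h) (𝓝[>] 0) (𝓝 (μ M))

theorem norm_le_norm_id_add_smul_mul_norm_add (M : E →L[ℝ] E) (h : ℝ) (y w : E) :
    ‖w‖ ≤ ‖ContinuousLinearMap.id ℝ E + h • M‖ * ‖y‖ + ‖w - y - h • M y‖ :=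
  calc ‖w‖ = ‖(ContinuousLinearMap.id ℝ E + h • M) y + (w - y - h • M y)‖ := by
        congr 1
        simp only [add_apply, ContinuousLinearMap.id_apply, smul_apply]
        abel
    _ ≤ ‖ContinuousLinearMap.id ℝ E + h • M‖ * ‖y‖ + ‖w - y - h • M y‖ :=
        (norm_add_le _ _).trans (add_le_add_left (ContinuousLinearMap.le_opNorm _ _) _)

namespace IsLogNorm

variable {μ : (E →L[ℝ] E) → ℝ}

theorem le_add_norm_sub (hμ : IsLogNorm μ) (M N : E →L[ℝ] E) : μ M ≤ μ N + ‖M - N‖ := by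
  refine le_of_tendsto_of_tendsto (hμ M) ((hμ N).add_const ‖M - N‖) ?_
  filter_upwards [self_mem_nhdsWithin] with h (hh : 0 < h)
  have hM : ‖ContinuousLinearMap.id ℝ E + h • M‖ ≤
      ‖ContinuousLinearMap.id ℝ E + h • N‖ + h * ‖M - N‖ :=
    calc ‖ContinuousLinearMap.id ℝ E + h • M‖
        = ‖(ContinuousLinearMap.id ℝ E + h • N) + h • (M - N)‖ := by rw [smul_sub]; abel_nf
      _ ≤ ‖ContinuousLinearMap.id ℝ E + h • N‖ + h * ‖M - N‖ := by
        grw [norm_add_le, norm_smul, Real.norm_of_nonneg hh.le]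
  rw [div_add' _ _ _ hh.ne', div_le_div_iff_of_pos_right hh]
  linarith

theorem lipschitzWith (hμ : IsLogNorm μ) : LipschitzWith 1 μ :=
  LipschitzWith.of_le_add fun M N => by simpa [dist_eq_norm] using hμ.le_add_norm_sub M N

theorem eventually_slope_norm_lt (hμ : IsLogNorm μ) {x : ℝ → E} {M : E →L[ℝ] E} {s r : ℝ}
    (hx : HasDerivAt x (M (x s)) s) (hr : μ M * ‖x s‖ < r) :
    ∀ᶠ z in 𝓝[>] s, slope (fun u => ‖x u‖) s z < r := by
  set U : ℝ → ℝ := fun z => (‖ContinuousLinearMap.id ℝ E + (z - s) • M‖ - 1) / (z - s) * ‖x s‖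
    + ‖z - s‖⁻¹ * ‖x z - x s - (z - s) • M (x s)‖
  have hshift : Tendsto (· - s) (𝓝[>] s) (𝓝[>] 0) := by
    have h := (Filter.map_subRight_nhdsGT (c := s) (a := s)).le
    rwa [sub_self] at h
  have hU : Tendsto U (𝓝[>] s) (𝓝 (μ M * ‖x s‖)) := by
    have h := (((hμ M).comp hshift).mul_const ‖x s‖).add
      ((hasDerivAt_iff_tendsto.mp hx).mono_left nhdsWithin_le_nhds)
    rwa [add_zero] at h
  filter_upwards [hU.eventually (gt_mem_nhds hr), self_mem_nhdsWithin] with z hUz (hz : s < z)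
  refine lt_of_le_of_lt ?_ hUz
  have hzs : 0 < z - s := sub_pos.mpr hz
  have := norm_le_norm_id_add_smul_mul_norm_add M (z - s) (x s) (x z)
  simp only [U, slope_def_field, Real.norm_of_nonneg hzs.le]
  rw [div_mul_eq_mul_div, inv_mul_eq_div, ← add_div, div_le_div_iff_of_pos_right hzs]
  linarith

end IsLogNorm

end LogNorm

theorem hasDerivWithinAt_integral_Ici_of_continuousOn {g : ℝ → ℝ} {a b s : ℝ}
    (hg : ContinuousOn g (Icc a b)) (hs : s ∈ Ico a b) :
    HasDerivWithinAt (fun u => ∫ v in a..u, g v) (g s) (Ici s) s := by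
  have hmem : Icc a b ∈ 𝓝[>] s := Icc_mem_nhdsGT_of_mem hs
  refine intervalIntegral.integral_hasDerivWithinAt_right ?_
    ((hg.stronglyMeasurableAtFilter_nhdsWithin measurableSet_Icc s).filter_mono
      (nhdsWithin_le_of_mem hmem))
    ((hg s (Ico_subset_Icc_self hs)).mono_of_mem_nhdsWithin hmem)
  refine (hg.mono ?_).intervalIntegrable
  rw [uIcc_of_le hs.1]
  exact Icc_subset_Icc_right hs.2.le

theorem le_mul_exp_integral_add_of_frequently_slope_lt {f g : ℝ → ℝ} {a b ε : ℝ} (hab : a ≤ b)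
    (hf : ContinuousOn f (Icc a b)) (hg : ContinuousOn g (Icc a b)) (hfa : 0 ≤ f a)
    (hslope : ∀ s ∈ Ico a b, ∀ r, g s * f s < r → ∃ᶠ z in 𝓝[>] s, slope f s z < r)
    (hε : 0 < ε) :
    f b ≤ (f a + ε) * Real.exp ((∫ s in a..b, g s) + ε * (b - a)) := by
  set B : ℝ → ℝ := fun u => (f a + ε) * Real.exp ((∫ v in a..u, g v) + ε * (u - a))
  have hB : ContinuousOn B (Icc a b) := by
    have hG : ContinuousOn (fun u => ∫ v in a..u, g v) (Icc a b) := by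
      have h := intervalIntegral.continuousOn_primitive_interval (μ := MeasureTheory.volume)
        (a := a) (b := b) (f := g) (by rw [uIcc_of_le hab]; exact hg.integrableOn_Icc)
      rwa [uIcc_of_le hab] at h
    exact continuousOn_const.mul (hG.add (by fun_prop)).rexp
  have hB' : ∀ s ∈ Ico a b, HasDerivWithinAt B ((g s + ε) * B s) (Ici s) s := by
    intro s hs
    have hI := hasDerivWithinAt_integral_Ici_of_continuousOn hg hs
    have hL : HasDerivWithinAt (fun u => ε * (u - a)) ε (Ici s) s := by
      simpa using ((hasDerivWithinAt_id s (Ici s)).sub_const a).const_mul ε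
    exact ((hI.add hL).exp.const_mul (f a + ε)).congr_deriv (by simp only [B, Pi.add_apply]; ring)
  refine image_le_of_liminf_slope_right_lt_deriv_boundary' hf hslope (by simp [B, hε.le]) hB hB' ?_
    ⟨hab, le_rfl⟩
  -- where `f` touches `B`, `g f = g B < (g + ε) B` because `B > 0`
  intro s _ hfs
  have hBs : 0 < B s := by positivity
  rw [hfs]
  nlinarith

theorem le_mul_exp_integral_of_frequently_slope_lt {f g : ℝ → ℝ} {a b : ℝ} (hab : a ≤ b)
    (hf : ContinuousOn f (Icc a b)) (hg : ContinuousOn g (Icc a b)) (hfa : 0 ≤ f a)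
    (hslope : ∀ s ∈ Ico a b, ∀ r, g s * f s < r → ∃ᶠ z in 𝓝[>] s, slope f s z < r) :
    f b ≤ f a * Real.exp (∫ s in a..b, g s) := by
  set I := ∫ s in a..b, g s
  have hlim : Tendsto (fun ε => (f a + ε) * Real.exp (I + ε * (b - a))) (𝓝[>] 0)
      (𝓝 (f a * Real.exp I)) := by
    have h : Continuous (fun ε => (f a + ε) * Real.exp (I + ε * (b - a))) := by fun_prop
    simpa using (h.tendsto 0).mono_left nhdsWithin_le_nhds
  exact ge_of_tendsto hlim <| eventually_mem_nhdsWithin.mono fun ε hε =>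
    le_mul_exp_integral_add_of_frequently_slope_lt hab hf hg hfa hslope hε

/-- if `x` solves `ẋ = A(t)x` on `[t₀,∞)` with `A` continuous, then
`‖x(t)‖ ≤ ‖x(t₀)‖ · exp(∫_{t₀}^t μ[A(s)] ds)` for all `t ≥ t₀`, where `μ` is the
logarithmic norm induced by the vector norm. -/
theorem stmt6 {E : Type*} [NormedAddCommGroup E] [NormedSpace ℝ E]
    (t₀ : ℝ) (A : ℝ → (E →L[ℝ] E)) (hA : ContinuousOn A (Set.Ici t₀))
    (μ : (E →L[ℝ] E) → ℝ)
    (hμ : ∀ M : E →L[ℝ] E,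
      Tendsto (fun h : ℝ => (‖ContinuousLinearMap.id ℝ E + h • M‖ - 1) / h)
        (𝓝[>] 0) (𝓝 (μ M)))
    (x : ℝ → E) (hx : ∀ t ≥ t₀, HasDerivAt x (A t (x t)) t) :
    ∀ t ≥ t₀, ‖x t‖ ≤ ‖x t₀‖ * Real.exp (∫ s in t₀..t, μ (A s)) := by
  intro t ht
  have hμA : ContinuousOn (fun s => μ (A s)) (Ici t₀) :=
    (IsLogNorm.lipschitzWith hμ).continuous.comp_continuousOn hA
  refine le_mul_exp_integral_of_frequently_slope_lt ht
    (fun s hs => (hx s hs.1).continuousAt.continuousWithinAt.norm)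
    (hμA.mono Icc_subset_Ici_self) (norm_nonneg _) fun s hs r hr => ?_
  exact (IsLogNorm.eventually_slope_norm_lt hμ (hx s hs.1) hr).frequently
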